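/- For every integer m ≥ 2, N_m = 4·N_{m−1} − 2·N_{m−2}. -/

import Mathlib

/-- `Lessdot l₁ l₂ s` means `l₁ + l₂ ⋖ s`: for every bit position `i`,
the binary digits satisfy `(l₁)ᵢ + (l₂)ᵢ ≤ (s)ᵢ`. -/
def Lessdot (l₁ l₂ s : ℕ) : Prop :=
  ∀ i : ℕ, (l₁.testBit i).toNat + (l₂.testBit i).toNat ≤ (s.testBit i).toNat

open scoped Classical in
/-- `BSet r s = B_s^{(r)} = {2^r·l₁ + l₂ : l₁ + l₂ ⋖ s}`.
(Note `l₁ + l₂ ⋖ s` forces `l₁, l₂ ≤ s`, so the ranges capture the whole set.) -/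
noncomputable def BSet (r s : ℕ) : Finset ℕ :=
  ((Finset.range (s + 1) ×ˢ Finset.range (s + 1)).filter
    (fun p => Lessdot p.1 p.2 s)).image (fun p => 2 ^ r * p.1 + p.2)

/-- `Nnum r m = N_m^{(r)} = Σ_{s=0}^{2^m−1} |B_s^{(r)}|`. -/
noncomputable def Nnum (r m : ℕ) : ℕ := ∑ s ∈ Finset.range (2 ^ m), (BSet r s).card

/-!
Reading off the lowest bit of `s` gives `B_{2t} = 2·B_t` and `B_{2t+1} = 2·B_t + {0, 1, 2}`.
Hence `b_{2t} = b_t` and, by inclusion–exclusion, `b_{2t+1} = 3 b_t - d_t`, where `d_t` counts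
the pairs of consecutive integers in `B_t`. The set `2·B_t` contains no such pair, while
`2·B_t + {0, 1, 2}` contains exactly `2 b_t` of them, so `d_{2t} = 0` and `d_{2t+1} = 2 b_t`.
Summing over `s < 2^{m+1}` gives `N_{m+1} = 4 N_m - D_m` with `D_m = Σ_{t < 2^m} d_t`, and
`D_{m+1} = 2 N_m`.
-/

namespace Finset

/-- `S ∩ (S + 1)` has one element for each pair of consecutive integers in `S`. -/
def adjCount (S : Finset ℕ) : ℕ := #(S ∩ S.image (· + 1))

/-- `2·S + {0, 1, 2}`, grouped as `2·(S ∪ (S + 1)) ∪ (2·S + 1)`. -/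
def spread (S : Finset ℕ) : Finset ℕ :=
  (S ∪ S.image (· + 1)).image (2 * ·) ∪ S.image (2 * · + 1)

theorem card_image_add_one (S : Finset ℕ) : #(S.image (· + 1)) = #S :=
  card_image_of_injective _ (add_left_injective 1)

theorem card_image_two_mul_add (S : Finset ℕ) (c : ℕ) : #(S.image (2 * · + c)) = #S :=
  card_image_of_injective _ fun _ _ h => by omega

theorem card_spread_add_adjCount (S : Finset ℕ) : #(spread S) + adjCount S = 3 * #S := by
  have hdisj : Disjoint ((S ∪ S.image (· + 1)).image (2 * ·)) (S.image (2 * · + 1)) := by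
    simp only [disjoint_left, mem_image]
    rintro _ ⟨x, -, rfl⟩ ⟨y, -, h⟩
    omega
  have hunion := card_union_add_card_inter S (S.image (· + 1))
  rw [card_image_add_one] at hunion
  rw [spread, card_union_of_disjoint hdisj, card_image_two_mul_add S 1,
    card_image_of_injective _ (fun _ _ h => by simpa using h), adjCount]
  omega

theorem adjCount_image_two_mul (S : Finset ℕ) : adjCount (S.image (2 * ·)) = 0 := by
  rw [adjCount, card_eq_zero, ← disjoint_iff_inter_eq_empty, disjoint_left]
  simp only [mem_image]
  rintro _ ⟨x, -, rfl⟩ ⟨_, ⟨y, -, rfl⟩, h⟩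
  omega

theorem spread_inter_image_add_one (S : Finset ℕ) :
    spread S ∩ (spread S).image (· + 1) = S.image (2 * · + 1) ∪ S.image (2 * · + 2) := by
  ext n
  simp only [spread, mem_inter, mem_union, mem_image]
  constructor
  · rintro ⟨⟨a, -, ha⟩ | hodd, m, hm, rfl⟩
    · rcases hm with ⟨b, -, hb⟩ | ⟨y, hy, rfl⟩
      · omega
      · exact .inr ⟨y, hy, rfl⟩
    · exact .inl hodd
  · rintro (⟨x, hx, rfl⟩ | ⟨x, hx, rfl⟩)
    · exact ⟨.inr ⟨x, hx, rfl⟩, 2 * x, .inl ⟨x, .inl hx, rfl⟩, rfl⟩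
    · exact ⟨.inl ⟨x + 1, .inr ⟨x, hx, rfl⟩, by ring⟩, 2 * x + 1, .inr ⟨x, hx, rfl⟩, rfl⟩

theorem adjCount_spread (S : Finset ℕ) : adjCount (spread S) = 2 * #S := by
  have hdisj : Disjoint (S.image (2 * · + 1)) (S.image (2 * · + 2)) := by
    simp only [disjoint_left, mem_image]
    rintro _ ⟨x, -, rfl⟩ ⟨y, -, h⟩
    omega
  rw [adjCount, spread_inter_image_add_one, card_union_of_disjoint hdisj,
    card_image_two_mul_add, card_image_two_mul_add, two_mul]

end Finset

open Finset

theorem Lessdot.comm {a b s : ℕ} : Lessdot a b s ↔ Lessdot b a s := by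
  simp only [Lessdot, add_comm]

theorem Lessdot.le_left {a b s : ℕ} (h : Lessdot a b s) : a ≤ s :=
  Nat.le_of_testBit fun i hi => by
    have := h i
    cases hs : s.testBit i <;> simp_all

theorem Lessdot.le_right {a b s : ℕ} (h : Lessdot a b s) : b ≤ s :=
  (Lessdot.comm.1 h).le_left

theorem Nat.toNat_testBit_zero (a : ℕ) : (a.testBit 0).toNat = a % 2 := by
  rw [Nat.toNat_testBit, pow_zero, Nat.div_one]

theorem lessdot_two_mul_add_iff {a b s u : ℕ} (hu : u ≤ 1) :
    Lessdot a b (2 * s + u) ↔ Lessdot (a / 2) (b / 2) s ∧ a % 2 + b % 2 ≤ u := by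
  have hdiv : (2 * s + u) / 2 = s := by omega
  have hmod : (2 * s + u) % 2 = u := by omega
  constructor
  · intro h
    refine ⟨fun i => ?_, ?_⟩
    · simpa only [Nat.testBit_add_one, hdiv] using h (i + 1)
    · simpa only [Nat.toNat_testBit_zero, hmod] using h 0
  · rintro ⟨h, h0⟩ (_ | i)
    · simpa only [Nat.toNat_testBit_zero, hmod] using h0
    · simpa only [Nat.testBit_add_one, hdiv] using h i

theorem mem_BSet {r s n : ℕ} :
    n ∈ BSet r s ↔ ∃ a b : ℕ, Lessdot a b s ∧ 2 ^ r * a + b = n := by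
  simp only [BSet, mem_image, mem_filter, mem_product, mem_range, Prod.exists]
  constructor
  · rintro ⟨a, b, ⟨-, h⟩, rfl⟩
    exact ⟨a, b, h, rfl⟩
  · rintro ⟨a, b, h, rfl⟩
    exact ⟨a, b, ⟨⟨Nat.lt_succ_of_le h.le_left, Nat.lt_succ_of_le h.le_right⟩, h⟩, rfl⟩

theorem mem_BSet_one_two_mul_add {t u n : ℕ} (hu : u ≤ 1) :
    n ∈ BSet 1 (2 * t + u) ↔
      ∃ x ∈ BSet 1 t, ∃ e₁ e₂ : ℕ, e₁ + e₂ ≤ u ∧ n = 2 * x + (2 * e₁ + e₂) := by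
  simp only [mem_BSet, pow_one]
  constructor
  · rintro ⟨a, b, h, rfl⟩
    rw [lessdot_two_mul_add_iff hu] at h
    exact ⟨_, ⟨a / 2, b / 2, h.1, rfl⟩, a % 2, b % 2, h.2, by omega⟩
  · rintro ⟨_, ⟨a, b, h, rfl⟩, e₁, e₂, he, rfl⟩
    refine ⟨2 * a + e₁, 2 * b + e₂, (lessdot_two_mul_add_iff hu).2 ⟨?_, by omega⟩, by omega⟩
    rwa [show (2 * a + e₁) / 2 = a by omega, show (2 * b + e₂) / 2 = b by omega]

theorem BSet_one_two_mul (t : ℕ) : BSet 1 (2 * t) = (BSet 1 t).image (2 * ·) := by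
  ext n
  rw [← add_zero (2 * t), mem_BSet_one_two_mul_add zero_le_one, mem_image]
  constructor
  · rintro ⟨x, hx, e₁, e₂, he, rfl⟩
    exact ⟨x, hx, by omega⟩
  · rintro ⟨x, hx, rfl⟩
    exact ⟨x, hx, 0, 0, le_rfl, rfl⟩

theorem BSet_one_two_mul_add_one (t : ℕ) : BSet 1 (2 * t + 1) = (BSet 1 t).spread := by
  ext n
  simp only [mem_BSet_one_two_mul_add le_rfl, spread, mem_union, mem_image]
  constructor
  · rintro ⟨x, hx, e₁, e₂, he, rfl⟩
    obtain ⟨rfl, rfl⟩ | ⟨rfl, rfl⟩ | ⟨rfl, rfl⟩ :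
        (e₁ = 0 ∧ e₂ = 0) ∨ (e₁ = 0 ∧ e₂ = 1) ∨ (e₁ = 1 ∧ e₂ = 0) := by omega
    · exact .inl ⟨x, .inl hx, rfl⟩
    · exact .inr ⟨x, hx, rfl⟩
    · exact .inl ⟨x + 1, .inr ⟨x, hx, rfl⟩, by ring⟩
  · rintro (⟨_, hx | ⟨x, hx, rfl⟩, rfl⟩ | ⟨x, hx, rfl⟩)
    · exact ⟨_, hx, 0, 0, zero_le_one, rfl⟩
    · exact ⟨x, hx, 1, 0, le_rfl, by ring⟩
    · exact ⟨x, hx, 0, 1, le_rfl, rfl⟩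

theorem sum_range_two_mul {M : Type*} [AddCommMonoid M] (f : ℕ → M) (n : ℕ) :
    ∑ i ∈ range (2 * n), f i = ∑ j ∈ range n, (f (2 * j) + f (2 * j + 1)) := by
  induction n with
  | zero => simp
  | succ n ih =>
    rw [Nat.mul_succ, sum_range_succ, sum_range_succ, ih, sum_range_succ, add_assoc]

noncomputable def adjTotal (m : ℕ) : ℕ := ∑ t ∈ range (2 ^ m), (BSet 1 t).adjCount

theorem Nnum_one_succ_add_adjTotal (m : ℕ) : Nnum 1 (m + 1) + adjTotal m = 4 * Nnum 1 m := by
  rw [Nnum, adjTotal, pow_succ', sum_range_two_mul, ← sum_add_distrib, Nnum, mul_sum]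
  refine sum_congr rfl fun t _ => ?_
  have := card_spread_add_adjCount (BSet 1 t)
  rw [BSet_one_two_mul, card_image_of_injective _ (fun _ _ h => by omega),
    BSet_one_two_mul_add_one]
  omega

theorem adjTotal_succ (m : ℕ) : adjTotal (m + 1) = 2 * Nnum 1 m := by
  rw [adjTotal, pow_succ', sum_range_two_mul, Nnum, mul_sum]
  refine sum_congr rfl fun t _ => ?_
  rw [BSet_one_two_mul, adjCount_image_two_mul, BSet_one_two_mul_add_one, adjCount_spread,
    zero_add]

theorem Nnum_one_add_two (k : ℕ) : Nnum 1 (k + 2) + 2 * Nnum 1 k = 4 * Nnum 1 (k + 1) := by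
  rw [← adjTotal_succ]
  exact Nnum_one_succ_add_adjTotal (k + 1)

/-- For every `m ≥ 2`, `N_m = 4·N_{m−1} − 2·N_{m−2}` (as integers). -/
theorem stmt_7 (m : ℕ) (hm : 2 ≤ m) :
    (Nnum 1 m : ℤ) = 4 * Nnum 1 (m - 1) - 2 * Nnum 1 (m - 2) := by
  obtain ⟨k, rfl⟩ : ∃ k, m = k + 2 := ⟨m - 2, by omega⟩
  have h : (Nnum 1 (k + 2) : ℤ) + 2 * Nnum 1 k = 4 * Nnum 1 (k + 1) := by
    exact_mod_cast Nnum_one_add_two k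
  rw [show k + 2 - 1 = k + 1 by omega, Nat.add_sub_cancel]
  linarith
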